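/- Let G be a digraph, let r be a vertex of G, and let L_0, L_1, L_2, … be the level decomposition of G from r. Then for any vertices u ∈ L_i and v ∈ L_j such that G contains a directed path from u to v, it holds that |i − j| ≤ 1. -/
import Mathlib


/-- Auxiliary definition for the level decomposition: `(levelsPair E r i).1` is the level
`L_i` and `(levelsPair E r i).2` is the union `L_0 ∪ ⋯ ∪ L_i`.  Level `L_0` consists of all
vertices reachable from `r`; for `i ≥ 1`, an even level `L_i` consists of the new vertices
reachable from the previous levels, and an odd level `L_i` consists of the new vertices from
which some vertex of the previous levels is reachable. -/
def levelsPair {V : Type*} (E : V → V → Prop) (r : V) : ℕ → Set V × Set V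
  | 0 => ({v | Relation.ReflTransGen E r v}, {v | Relation.ReflTransGen E r v})
  | i + 1 =>
      let U := (levelsPair E r i).2
      let L : Set V := {v | v ∉ U ∧ ∃ u ∈ U,
        if (i + 1) % 2 = 0 then Relation.ReflTransGen E u v else Relation.ReflTransGen E v u}
      (L, U ∪ L)

/-- The level decomposition `L_0, L_1, L_2, …` of the digraph `E` from the vertex `r`. -/
def levels {V : Type*} (E : V → V → Prop) (r : V) (i : ℕ) : Set V := (levelsPair E r i).1

namespace LevelsAux

variable {V : Type*} {E : V → V → Prop} {r : V}

/-- The union `L_0 ∪ ⋯ ∪ L_i`. -/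
def U (E : V → V → Prop) (r : V) (i : ℕ) : Set V := (levelsPair E r i).2

lemma U_succ (n : ℕ) : U E r (n + 1) = U E r n ∪ levels E r (n + 1) := rfl

lemma mem_levels_succ {v : V} {n : ℕ} :
    v ∈ levels E r (n + 1) ↔ v ∉ U E r n ∧ ∃ u ∈ U E r n,
      if (n + 1) % 2 = 0 then Relation.ReflTransGen E u v
      else Relation.ReflTransGen E v u := Iff.rfl

lemma U_mono {k m : ℕ} (h : k ≤ m) : U E r k ⊆ U E r m := by
  induction m with
  | zero => simpa [Nat.le_zero.mp h] using Set.Subset.rfl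
  | succ n ih =>
      rcases Nat.lt_or_ge k (n + 1) with hk | hk
      · exact (ih (Nat.lt_succ_iff.mp hk)).trans (by rw [U_succ]; exact Set.subset_union_left)
      · have : k = n + 1 := le_antisymm h hk
        subst this; exact Set.Subset.rfl

lemma levels_subset_U (i : ℕ) : levels E r i ⊆ U E r i := by
  cases i with
  | zero => exact Set.Subset.rfl
  | succ n => rw [U_succ]; exact Set.subset_union_right

lemma mem_U_of_even {n : ℕ} {w v : V} (hn : (n + 1) % 2 = 0)
    (hw : w ∈ U E r n) (h : Relation.ReflTransGen E w v) : v ∈ U E r (n + 1) := by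
  by_cases hv : v ∈ U E r n
  · exact U_mono (Nat.le_succ n) hv
  · rw [U_succ]
    exact Or.inr (mem_levels_succ.mpr ⟨hv, w, hw, by rw [if_pos hn]; exact h⟩)

lemma mem_U_of_odd {n : ℕ} {w v : V} (hn : (n + 1) % 2 ≠ 0)
    (hw : w ∈ U E r n) (h : Relation.ReflTransGen E v w) : v ∈ U E r (n + 1) := by
  by_cases hv : v ∈ U E r n
  · exact U_mono (Nat.le_succ n) hv
  · rw [U_succ]
    exact Or.inr (mem_levels_succ.mpr ⟨hv, w, hw, by rw [if_neg hn]; exact h⟩)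

lemma level_le {u : V} {i k : ℕ} (hu : u ∈ levels E r i) (hk : u ∈ U E r k) : i ≤ k := by
  by_contra h
  push_neg at h
  cases i with
  | zero => omega
  | succ n =>
      exact (mem_levels_succ.mp hu).1 (U_mono (Nat.lt_succ_iff.mp h) hk)

end LevelsAux

/-- If `u ∈ L_i`, `v ∈ L_j` in the level decomposition of a digraph from `r`, and there is a
directed path from `u` to `v`, then `|i - j| ≤ 1`. -/
theorem stmt8 {V : Type} [Fintype V] (E : V → V → Prop) (r : V)
    (u v : V) (i j : ℕ) (hu : u ∈ levels E r i) (hv : v ∈ levels E r j)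
    (huv : Relation.ReflTransGen E u v) :
    |(i : ℤ) - (j : ℤ)| ≤ 1 := by
  open LevelsAux in
  have hj : j ≤ i + 1 := by
    rcases Nat.mod_two_eq_zero_or_one i with hi | hi
    · cases i with
      | zero =>
          have hru : Relation.ReflTransGen E r u := hu
          have : v ∈ U E r 0 := hru.trans huv
          exact (level_le hv this).trans (by omega)
      | succ n =>
          obtain ⟨-, w, hw, hwu⟩ := mem_levels_succ.mp hu
          rw [if_pos hi] at hwu
          have : v ∈ U E r (n + 1) := mem_U_of_even hi hw (hwu.trans huv)
          exact (level_le hv this).trans (by omega)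
    · have hi1 : (i + 1) % 2 = 0 := by omega
      have : v ∈ U E r (i + 1) := mem_U_of_even hi1 (levels_subset_U i hu) huv
      exact level_le hv this
  have hij : i ≤ j + 1 := by
    rcases Nat.mod_two_eq_zero_or_one j with hjp | hjp
    · have hj1 : (j + 1) % 2 ≠ 0 := by omega
      have : u ∈ U E r (j + 1) := mem_U_of_odd hj1 (levels_subset_U j hv) huv
      exact level_le hu this
    · cases j with
      | zero => omega
      | succ n =>
          obtain ⟨-, w, hw, hvw⟩ := mem_levels_succ.mp hv
          rw [if_neg (by omega : (n + 1) % 2 ≠ 0)] at hvw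
          have : u ∈ U E r (n + 1) := mem_U_of_odd (by omega) hw (huv.trans hvw)
          exact (level_le hu this).trans (by omega)
  rw [abs_le]
  omega
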